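/- For every twice-differentiable function ψ : ℝ → ℂ², the square of the harmonic Lévy-Leblond Hamiltonian satisfies H_LL(H_LL ψ)(x) = −ψ″(x) + β(k/2)x² ψ(x) − i k x γ₊ ψ(x) for all x ∈ ℝ; that is, H_LL² = β·H_sch, where H_sch is the Schrödinger-like Hamiltonian (H_sch ψ)(x) = −(1/β)ψ″(x) + (k/2)x² ψ(x) − i(k/β) x γ₊ ψ(x). -/

import Mathlib

open Matrix

noncomputable section

/-- The gamma matrix `γ¹ = [[1,0],[0,−1]]`. -/
def γ1 : Matrix (Fin 2) (Fin 2) ℂ := !![1, 0; 0, -1]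

/-- The gamma matrix `γ₊ = [[0,1],[0,0]]`. -/
def γp : Matrix (Fin 2) (Fin 2) ℂ := !![0, 1; 0, 0]

/-- The gamma matrix `γ₋ = [[0,0],[1,0]]`. -/
def γm : Matrix (Fin 2) (Fin 2) ℂ := !![0, 0; 1, 0]

/-- The harmonic Lévy-Leblond Hamiltonian:
`(H_LL ψ)(x) = β γ₋ ψ(x) − i γ¹ ψ′(x) + (k/2) x² γ₊ ψ(x)`. -/
def HLL (β k : ℝ) (ψ : ℝ → (Fin 2 → ℂ)) : ℝ → (Fin 2 → ℂ) :=
  fun x => (β : ℂ) • γm.mulVec (ψ x) - Complex.I • γ1.mulVec (deriv ψ x)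
    + ((k / 2 * x ^ 2 : ℝ) : ℂ) • γp.mulVec (ψ x)

/-- The lowering operator:
`(bψ)(x) = √(βk/2)·x·ψ(x) + ψ′(x) − i√(k/(2β)) γ₊ ψ(x)`. -/
def lower (β k : ℝ) (ψ : ℝ → (Fin 2 → ℂ)) : ℝ → (Fin 2 → ℂ) :=
  fun x => ((Real.sqrt (β * k / 2) * x : ℝ) : ℂ) • ψ x + deriv ψ x
    - (Complex.I * ((Real.sqrt (k / (2 * β)) : ℝ) : ℂ)) • γp.mulVec (ψ x)

/-- The raising operator:
`(b†ψ)(x) = √(βk/2)·x·ψ(x) − ψ′(x) − i√(k/(2β)) γ₊ ψ(x)`. -/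
def raise (β k : ℝ) (ψ : ℝ → (Fin 2 → ℂ)) : ℝ → (Fin 2 → ℂ) :=
  fun x => ((Real.sqrt (β * k / 2) * x : ℝ) : ℂ) • ψ x - deriv ψ x
    - (Complex.I * ((Real.sqrt (k / (2 * β)) : ℝ) : ℂ)) • γp.mulVec (ψ x)


/-! Expanding `H_LL²` gives the nine products of `γ₋, γ¹, γ₊`. The Galilean Clifford relations
`γ₋² = γ₊² = 0`, `(γ¹)² = 1`, `{γ₋, γ₊} = 1`, `{γ¹, γ±} = 0` kill every cross term except
`β V {γ₋, γ₊} = β V`, and the one term in which the derivative hits the potential,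
`-i V′ γ¹ γ₊ ψ`, reduces to `-i V′ γ₊ ψ` because `γ¹ γ₊ = γ₊`. -/

open Complex

lemma HasDerivAt.matrix_mulVec {n : Type*} [Fintype n] (A : Matrix n n ℂ) {f : ℝ → n → ℂ}
    {f' : n → ℂ} {x : ℝ} (hf : HasDerivAt f f' x) :
    HasDerivAt (fun x => A *ᵥ f x) (A *ᵥ f') x := by
  simpa [Function.comp_def] using
    ((A.mulVecLin.restrictScalars ℝ).toContinuousLinearMap.hasFDerivAt).comp_hasDerivAt x hf

section LevyLeblond

variable {n : Type*} [Fintype n] (Γm Γ1 Γp : Matrix n n ℂ)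

def levyLeblondOp (β : ℂ) (V : ℝ → ℂ) (ψ : ℝ → n → ℂ) : ℝ → n → ℂ :=
  fun x => β • Γm *ᵥ ψ x - I • Γ1 *ᵥ deriv ψ x + V x • Γp *ᵥ ψ x

structure IsGalileanGammaTriple [DecidableEq n] : Prop where
  minus_sq : Γm * Γm = 0
  plus_sq : Γp * Γp = 0
  one_sq : Γ1 * Γ1 = 1
  anticomm_minus_plus : Γm * Γp + Γp * Γm = 1
  anticomm_minus_one : Γm * Γ1 + Γ1 * Γm = 0
  anticomm_one_plus : Γ1 * Γp + Γp * Γ1 = 0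
  one_mul_plus_eq : Γ1 * Γp = Γp

variable {Γm Γ1 Γp}

lemma hasDerivAt_levyLeblondOp {β : ℂ} {V : ℝ → ℂ} {ψ : ℝ → n → ℂ} {x : ℝ} {v : ℂ}
    {ψ' ψ'' : n → ℂ} (hV : HasDerivAt V v x) (hψ : HasDerivAt ψ ψ' x)
    (hψ' : HasDerivAt (deriv ψ) ψ'' x) :
    HasDerivAt (levyLeblondOp Γm Γ1 Γp β V ψ)
      (β • Γm *ᵥ ψ' - I • Γ1 *ᵥ ψ'' + (V x • Γp *ᵥ ψ' + v • Γp *ᵥ ψ x)) x :=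
  (((hψ.matrix_mulVec Γm).const_smul β).sub ((hψ'.matrix_mulVec Γ1).const_smul I)).add
    (hV.smul (hψ.matrix_mulVec Γp))

lemma levyLeblondOp_levyLeblondOp_apply {β : ℂ} {V : ℝ → ℂ} {ψ : ℝ → n → ℂ} {x : ℝ} {v : ℂ}
    (hV : HasDerivAt V v x) (hψ : DifferentiableAt ℝ ψ x)
    (hψ' : DifferentiableAt ℝ (deriv ψ) x) :
    levyLeblondOp Γm Γ1 Γp β V (levyLeblondOp Γm Γ1 Γp β V ψ) x =
      β ^ 2 • (Γm * Γm) *ᵥ ψ x - (I * β) • (Γm * Γ1 + Γ1 * Γm) *ᵥ deriv ψ x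
        + (β * V x) • (Γm * Γp + Γp * Γm) *ᵥ ψ x - (Γ1 * Γ1) *ᵥ deriv (deriv ψ) x
        - (I * v) • (Γ1 * Γp) *ᵥ ψ x - (I * V x) • (Γ1 * Γp + Γp * Γ1) *ᵥ deriv ψ x
        + V x ^ 2 • (Γp * Γp) *ᵥ ψ x := by
  rw [levyLeblondOp, (hasDerivAt_levyLeblondOp hV hψ.hasDerivAt hψ'.hasDerivAt).deriv]
  simp only [levyLeblondOp, mulVec_add, mulVec_sub, mulVec_smul, mulVec_mulVec, add_mulVec]
  match_scalars <;> ring_nf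
  simp only [I_sq]

lemma IsGalileanGammaTriple.levyLeblondOp_sq [DecidableEq n]
    (h : IsGalileanGammaTriple Γm Γ1 Γp) {β : ℂ} {V : ℝ → ℂ} {ψ : ℝ → n → ℂ} {x : ℝ} {v : ℂ}
    (hV : HasDerivAt V v x) (hψ : DifferentiableAt ℝ ψ x)
    (hψ' : DifferentiableAt ℝ (deriv ψ) x) :
    levyLeblondOp Γm Γ1 Γp β V (levyLeblondOp Γm Γ1 Γp β V ψ) x =
      -deriv (deriv ψ) x + (β * V x) • ψ x - (I * v) • Γp *ᵥ ψ x := by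
  rw [levyLeblondOp_levyLeblondOp_apply hV hψ hψ', h.minus_sq, h.plus_sq, h.one_sq,
    h.anticomm_minus_plus, h.anticomm_minus_one, h.anticomm_one_plus, h.one_mul_plus_eq]
  simp only [zero_mulVec, one_mulVec, smul_zero, sub_zero, add_zero, zero_add]
  abel

end LevyLeblond

lemma isGalileanGammaTriple_γm_γ1_γp : IsGalileanGammaTriple γm γ1 γp := by
  constructor <;> ext i j <;> fin_cases i <;> fin_cases j <;> simp [γm, γ1, γp]

lemma HLL_eq_levyLeblondOp (β k : ℝ) :
    HLL β k = levyLeblondOp γm γ1 γp β (fun x : ℝ => ((k / 2 * x ^ 2 : ℝ) : ℂ)) :=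
  rfl

lemma hasDerivAt_harmonicPotential (k x : ℝ) :
    HasDerivAt (fun x : ℝ => ((k / 2 * x ^ 2 : ℝ) : ℂ)) ((k * x : ℝ) : ℂ) x := by
  convert ((hasDerivAt_pow 2 x).const_mul (k / 2)).ofReal_comp using 2
  ring

theorem HLL_sq_general (β k : ℝ)
    (ψ : ℝ → (Fin 2 → ℂ))
    (hψ1 : Differentiable ℝ ψ) (hψ2 : Differentiable ℝ (deriv ψ)) :
    ∀ x : ℝ, HLL β k (HLL β k ψ) x
      = -(deriv (deriv ψ) x) + ((β * (k / 2) * x ^ 2 : ℝ) : ℂ) • ψ x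
        - (Complex.I * ((k * x : ℝ) : ℂ)) • γp.mulVec (ψ x) := by
  intro x
  rw [HLL_eq_levyLeblondOp, isGalileanGammaTriple_γm_γ1_γp.levyLeblondOp_sq
    (hasDerivAt_harmonicPotential k x) (hψ1 x) (hψ2 x)]
  push_cast
  ring_nf

/-- For every twice-differentiable `ψ : ℝ → ℂ²`,
`H_LL(H_LL ψ)(x) = −ψ″(x) + β(k/2)x² ψ(x) − i k x γ₊ ψ(x)`,
i.e. `H_LL² = β·H_sch` where `H_sch` is the Schrödinger-like Hamiltonian. -/
theorem HLL_sq (β k : ℝ) (hβ : 0 < β) (hk : 0 < k)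
    (ψ : ℝ → (Fin 2 → ℂ))
    (hψ1 : Differentiable ℝ ψ) (hψ2 : Differentiable ℝ (deriv ψ)) :
    ∀ x : ℝ, HLL β k (HLL β k ψ) x
      = -(deriv (deriv ψ) x) + ((β * (k / 2) * x ^ 2 : ℝ) : ℂ) • ψ x
        - (Complex.I * ((k * x : ℝ) : ℂ)) • γp.mulVec (ψ x) :=
  HLL_sq_general β k ψ hψ1 hψ2

end
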